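/- On M = ℝ², Weinstein's three-point function S_can is admissible: for all x, y, z ∈ M, S_can(x, s_x(y), z) = −S_can(x, y, z), where s_x is the symmetry at x. (Admissibility of S_can, asserted in Remark 8.7 and Section 8.3, is one of the compatibility conditions defining the phase of the WKB quantisation kernel.) -/

import Mathlib

/-- The symmetry `s_{(a,ℓ)}(a',ℓ') = (2a - a', 2cosh(a - a')ℓ - ℓ')`. -/
noncomputable def symmPoincare (x y : ℝ × ℝ) : ℝ × ℝ :=
  (2 * x.1 - y.1, 2 * Real.cosh (x.1 - y.1) * x.2 - y.2)

/-- Weinstein's three-point function. -/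
noncomputable def Scan (x y z : ℝ × ℝ) : ℝ :=
  Real.sinh (x.1 - y.1) * z.2 + Real.sinh (y.1 - z.1) * x.2
    + Real.sinh (z.1 - x.1) * y.2

open Real

theorem Real.sinh_add_sub_sinh_sub (u v : ℝ) :
    sinh (u + v) - sinh (u - v) = 2 * cosh u * sinh v := by
  rw [sinh_add, sinh_sub]
  ring

/- Write `x = (a, l)`, `y = (b, m)`, `z = (c, n)`, `u = a - b`, `v = c - a`. The reflection
`a - (2a - b) = -u` flips the sign of the `n` term, and the coefficient of `l` becomes
`sinh (u - v) + 2 cosh u sinh v = sinh (u + v) = -sinh (b - c)`. -/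
/-- `S_can` is admissible: `S_can(x, s_x(y), z) = -S_can(x, y, z)`. -/
theorem Scan_admissible :
    ∀ x y z : ℝ × ℝ, Scan x (symmPoincare x y) z = - Scan x y z := by
  rintro ⟨a, l⟩ ⟨b, m⟩ ⟨c, n⟩
  simp only [Scan, symmPoincare]
  rw [show a - (2 * a - b) = -(a - b) by ring, show 2 * a - b - c = (a - b) - (c - a) by ring,
    show b - c = -((a - b) + (c - a)) by ring, sinh_neg, sinh_neg]
  linear_combination -l * sinh_add_sub_sinh_sub (a - b) (c - a)
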